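/- arXiv:2004.05423 — 2 statements merged into one kernel-verified Lean document; each statement's English description precedes it below -/
import Mathlib

section
/- Let h(t) = ∑_{i=0}^s h_it^i be a real polynomial of degree s ≤ d, let (p,q) be its symmetric decomposition with respect to d, let ℓ = d+1-s, and let r ≥ ℓ be an integer. Then there are uniquely determined real polynomials v_r(t) = ∑_{i=0}^{d} v_{r,i}t^i and w_r(t) = ∑_{i=0}^{r+s-ℓ-1} w_{r,i}t^i satisfying v_{r,i} = v_{r,d-i} for all 0 ≤ i ≤ d and w_{r,i} = w_{r,r+s-ℓ-1-i} for all 0 ≤ i ≤ r+s-ℓ-1, such that (1+t+⋯+t^{r-1})h(t) = v_r(t) + t^ℓ w_r(t). Moreover, with the convention h_i := 0 for i ∉ {0,1,…,s}, their coefficients are given by v_{r,i} = h_0 + ⋯ + h_i − h_d − ⋯ − h_{d-i+1} and w_{r,i} = −h_{ℓ−r} − h_{ℓ+1−r} − ⋯ − h_{ℓ+i−r} + h_s + h_{s-1} + ⋯ + h_{s-i}, and v_r(t) = p(t) for all r ≥ ℓ. -/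
open Polynomial

/-- The geometric polynomial `1 + t + ⋯ + t^{r-1}`. -/
noncomputable def geomPoly (r : ℕ) : ℝ[X] := ∑ j ∈ Finset.range r, X ^ j

/-- `sect r i f` is the polynomial `f^{⟨r,i⟩}` whose `n`-th coefficient is the `(r*n+i)`-th
coefficient of `f` (valid definition for `r ≥ 1`). -/
noncomputable def sect (r i : ℕ) (f : ℝ[X]) : ℝ[X] :=
  ∑ n ∈ Finset.range (f.natDegree + 1), C (f.coeff (r * n + i)) * X ^ n

/-- The operator `U_r^D h = (h·(1+t+⋯+t^{r-1})^D)^{⟨r,0⟩}`. -/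
noncomputable def Uop (r D : ℕ) (h : ℝ[X]) : ℝ[X] := sect r 0 (h * geomPoly r ^ D)

/-- `(p, q)` is the symmetric decomposition of `h` with respect to `d`. -/
def IsSymmDecomp (d : ℕ) (h p q : ℝ[X]) : Prop :=
  h = p + X * q ∧
  p.natDegree ≤ d ∧ (∀ i ≤ d, p.coeff i = p.coeff (d - i)) ∧
  q.natDegree ≤ d - 1 ∧ (∀ i ≤ d - 1, q.coeff i = q.coeff (d - 1 - i))

/-- A real polynomial is real-rooted if it is zero or all of its complex roots are real. -/
def RealRooted (f : ℝ[X]) : Prop :=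
  f = 0 ∨ ∀ z : ℂ, aeval z f = 0 → z.im = 0

/-- The real roots of `f`, with multiplicity, in weakly decreasing order. -/
noncomputable def descRoots (f : ℝ[X]) : List ℝ := (f.roots.sort (· ≤ ·)).reverse

/-- `Interlaces f g` means `f ⪯ g`: both are real-rooted and, unless one of them is zero,
the decreasingly ordered root lists `s` of `f` and `t` of `g` satisfy
`⋯ ≤ s_2 ≤ t_2 ≤ s_1 ≤ t_1` (with `deg g = deg f` or `deg f + 1`). -/
def Interlaces (f g : ℝ[X]) : Prop :=
  RealRooted f ∧ RealRooted g ∧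
  (f = 0 ∨ g = 0 ∨
    (((descRoots g).length = (descRoots f).length ∨
      (descRoots g).length = (descRoots f).length + 1) ∧
     (∀ i, (hf : i < (descRoots f).length) → (hg : i < (descRoots g).length) →
        (descRoots f).get ⟨i, hf⟩ ≤ (descRoots g).get ⟨i, hg⟩) ∧
     (∀ i, (hg : i + 1 < (descRoots g).length) → (hf : i < (descRoots f).length) →
        (descRoots g).get ⟨i + 1, hg⟩ ≤ (descRoots f).get ⟨i, hf⟩)))

/-- The coefficient of `h` at an integer index, zero for negative indices. -/
noncomputable def coeffZ (h : ℝ[X]) (j : ℤ) : ℝ := if 0 ≤ j then h.coeff j.toNat else 0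

/-- Property (H): `h_0 + ⋯ + h_i ≥ h_d + h_{d-1} + ⋯ + h_{d-i+1}` for all `i`. -/
def PropH (d : ℕ) (h : ℝ[X]) : Prop :=
  ∀ i : ℕ, ∑ j ∈ Finset.range i, coeffZ h ((d : ℤ) - j) ≤ ∑ j ∈ Finset.range (i + 1), h.coeff j

/-- Property (S): `h_0 + ⋯ + h_i ≤ h_s + h_{s-1} + ⋯ + h_{s-i}` for all `i`. -/
def PropS (s : ℕ) (h : ℝ[X]) : Prop :=
  ∀ i : ℕ, ∑ j ∈ Finset.range (i + 1), h.coeff j ≤ ∑ j ∈ Finset.range (i + 1), coeffZ h ((s : ℤ) - j)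

/- Write `H(k) = h_0 + ⋯ + h_k`, so that `H(k) = 0` for `k < 0` and `H(k) = h(1)` for `k ≥ s`.
The coefficients of `(1 + ⋯ + t^{r-1}) h` are `H(k) - H(k-r)`, and the symmetries of `p` and `q`
force `p_k = H(k) + H(d-k) - h(1)`. Hence `(1 + ⋯ + t^{r-1}) h - p` has coefficients
`h(1) - H(d-k) - H(k-r)`, which vanish for `k < ℓ`; dividing by `t^ℓ` leaves the coefficients
`h(1) - H(s-1-i) - H(ℓ+i-r)`, visibly invariant under `i ↦ r+s-ℓ-1-i`. For uniqueness, the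
difference of two solutions is a palindrome of degree `d` that is `t^ℓ` times a palindrome of
degree `r+s-ℓ-1`, and such a polynomial vanishes. -/

section Palindromic

variable {R : Type*}

def IsPalindromic [Semiring R] (n : ℕ) (f : R[X]) : Prop :=
  f.natDegree ≤ n ∧ ∀ i ≤ n, f.coeff i = f.coeff (n - i)

theorem IsPalindromic.sub [Ring R] {n : ℕ} {f g : R[X]} (hf : IsPalindromic n f)
    (hg : IsPalindromic n g) : IsPalindromic n (f - g) :=
  ⟨(natDegree_sub_le f g).trans (max_le hf.1 hg.1), fun i hi => by
    rw [coeff_sub, coeff_sub, hf.2 i hi, hg.2 i hi]⟩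

/- The reflection `j ↦ m + 2ℓ - j` coming from `z`, followed by the reflection `j ↦ d - j` of `u`,
shifts indices down by `m + 2ℓ - d ≥ ℓ`; since the coefficients of `u` below `ℓ` vanish,
all of them do. -/
theorem IsPalindromic.eq_zero_of_eq_X_pow_mul [Semiring R] {d m ℓ : ℕ} {u z : R[X]}
    (hu : IsPalindromic d u) (hz : IsPalindromic m z) (huz : u = X ^ ℓ * z) (hℓ : 0 < ℓ)
    (hdm : d ≤ m + ℓ) : u = 0 := by
  have hcoeff (j : ℕ) : u.coeff j = if ℓ ≤ j then z.coeff (j - ℓ) else 0 := by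
    rw [huz, coeff_X_pow_mul']
  ext j
  induction j using Nat.strong_induction_on with
  | _ j ih =>
    rw [coeff_zero]
    by_cases hjd : d < j
    · exact coeff_eq_zero_of_natDegree_lt (hu.1.trans_lt hjd)
    by_cases hjℓ : j < ℓ
    · rw [hcoeff, if_neg (by omega)]
    by_cases hjm : m < j - ℓ
    · rw [hcoeff, if_pos (by omega), coeff_eq_zero_of_natDegree_lt (hz.1.trans_lt hjm)]
    have hreflect : u.coeff j = u.coeff (m + 2 * ℓ - j) := by
      rw [hcoeff, hcoeff, if_pos (by omega), if_pos (by omega), hz.2 _ (by omega)]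
      congr 1
      omega
    rw [hreflect]
    by_cases hj' : d < m + 2 * ℓ - j
    · exact coeff_eq_zero_of_natDegree_lt (hu.1.trans_lt hj')
    rw [hu.2 _ (by omega)]
    exact ih _ (by omega)

theorem IsPalindromic.eq_of_add_X_pow_mul_eq [CommRing R] {d m ℓ : ℕ} {v v' w w' : R[X]}
    (hv : IsPalindromic d v) (hv' : IsPalindromic d v') (hw : IsPalindromic m w)
    (hw' : IsPalindromic m w') (hℓ : 0 < ℓ) (hdm : d ≤ m + ℓ)
    (heq : v + X ^ ℓ * w = v' + X ^ ℓ * w') : v = v' ∧ w = w' := by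
  have hvv' : v - v' = 0 :=
    (hv.sub hv').eq_zero_of_eq_X_pow_mul (hw'.sub hw) (by linear_combination heq) hℓ hdm
  obtain rfl := sub_eq_zero.1 hvv'
  exact ⟨rfl, (isRegular_X_pow ℓ).left (add_left_cancel heq)⟩

end Palindromic

section PartialSums

noncomputable def partialCoeffSum (h : ℝ[X]) (k : ℤ) : ℝ :=
  ∑ j ∈ Finset.range (k + 1).toNat, h.coeff j

variable (h : ℝ[X])

theorem coeffZ_natCast (n : ℕ) : coeffZ h n = h.coeff n := by
  simp [coeffZ]

theorem partialCoeffSum_natCast (n : ℕ) :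
    partialCoeffSum h n = ∑ j ∈ Finset.range (n + 1), h.coeff j := by
  simp [partialCoeffSum, Int.toNat_natCast_add_one]

theorem partialCoeffSum_zero : partialCoeffSum h 0 = h.coeff 0 := by
  simp [partialCoeffSum]

theorem partialCoeffSum_of_neg {k : ℤ} (hk : k < 0) : partialCoeffSum h k = 0 := by
  simp [partialCoeffSum, show (k + 1).toNat = 0 by omega]

theorem partialCoeffSum_of_natDegree_le {k : ℤ} (hk : (h.natDegree : ℤ) ≤ k) :
    partialCoeffSum h k = h.eval 1 := by
  simp [partialCoeffSum, eval_eq_sum_range' (p := h) (n := (k + 1).toNat) (by omega)]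

theorem partialCoeffSum_eq_sub_one_add (k : ℤ) :
    partialCoeffSum h k = partialCoeffSum h (k - 1) + coeffZ h k := by
  rcases lt_or_ge k 0 with hk | hk
  · simp [partialCoeffSum_of_neg h hk, partialCoeffSum_of_neg h (k := k - 1) (by omega), coeffZ,
      not_le.2 hk]
  · lift k to ℕ using hk
    rw [partialCoeffSum_natCast, coeffZ_natCast]
    cases k with
    | zero => simp [partialCoeffSum_of_neg]
    | succ k =>
      rw [Finset.sum_range_succ, show ((k + 1 : ℕ) : ℤ) - 1 = k by omega, partialCoeffSum_natCast]

theorem sum_range_coeffZ_add (a : ℤ) (n : ℕ) :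
    ∑ j ∈ Finset.range n, coeffZ h (a + j) =
      partialCoeffSum h (a + n - 1) - partialCoeffSum h (a - 1) := by
  induction n with
  | zero => simp
  | succ n ih =>
    rw [Finset.sum_range_succ, ih, partialCoeffSum_eq_sub_one_add h (a + (n + 1 : ℕ) - 1)]
    push_cast
    ring_nf

theorem sum_range_coeffZ_sub (b : ℤ) (n : ℕ) :
    ∑ j ∈ Finset.range n, coeffZ h (b - j) = partialCoeffSum h b - partialCoeffSum h (b - n) := by
  induction n with
  | zero => simp
  | succ n ih =>
    rw [Finset.sum_range_succ, ih, partialCoeffSum_eq_sub_one_add h (b - n)]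
    push_cast
    ring_nf

theorem coeff_X_pow_mul_eq_coeffZ (j k : ℕ) : (X ^ j * h).coeff k = coeffZ h ((k : ℤ) - j) := by
  rw [coeff_X_pow_mul', coeffZ]
  by_cases hjk : j ≤ k
  · rw [if_pos hjk, if_pos (by omega)]
    congr 1
    omega
  · rw [if_neg hjk, if_neg (by omega)]

theorem coeff_geomPoly_mul (r k : ℕ) :
    (geomPoly r * h).coeff k = partialCoeffSum h k - partialCoeffSum h ((k : ℤ) - r) := by
  simp only [geomPoly, Finset.sum_mul, finsetSum_coeff, coeff_X_pow_mul_eq_coeffZ,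
    sum_range_coeffZ_sub]

end PartialSums

namespace IsSymmDecomp

variable {d : ℕ} {h p q : ℝ[X]}

theorem coeff_zero_eq (hpq : IsSymmDecomp d h p q) : p.coeff 0 = h.coeff 0 := by
  rw [hpq.1, coeff_add, coeff_X_mul_zero, add_zero]

/- Compare `h_{i+1} = p_{i+1} + q_i` with `h_{d-i} = p_{d-i} + q_{d-1-i} = p_i + q_i`. -/
theorem coeff_succ (hpq : IsSymmDecomp d h p q) {i : ℕ} (hi : i < d) :
    p.coeff (i + 1) = p.coeff i + h.coeff (i + 1) - h.coeff (d - i) := by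
  obtain ⟨rfl, -, hps, -, hqs⟩ := hpq
  have hdi : d - i = d - 1 - i + 1 := by omega
  rw [hdi, coeff_add, coeff_add, coeff_X_mul, coeff_X_mul, ← hdi, ← hps i hi.le,
    ← hqs i (by omega)]
  ring

theorem coeff_eq (hpq : IsSymmDecomp d h p q) (hd : h.natDegree ≤ d) (k : ℕ) :
    p.coeff k = partialCoeffSum h k + partialCoeffSum h ((d : ℤ) - k) - h.eval 1 := by
  have htotal : partialCoeffSum h d = h.eval 1 := partialCoeffSum_of_natDegree_le h (by omega)
  rcases lt_or_ge d k with hdk | hkd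
  · rw [coeff_eq_zero_of_natDegree_lt (hpq.2.1.trans_lt hdk),
      partialCoeffSum_of_natDegree_le h (by omega), partialCoeffSum_of_neg h (by omega)]
    ring
  induction k with
  | zero => rw [hpq.coeff_zero_eq, Nat.cast_zero, sub_zero, htotal, partialCoeffSum_zero]; ring
  | succ k ih =>
    have hmirror : coeffZ h ((d : ℤ) - k) = h.coeff (d - k) := by
      rw [← coeffZ_natCast, Nat.cast_sub (by omega)]
    rw [hpq.coeff_succ (by omega), ih (by omega), partialCoeffSum_eq_sub_one_add h (k + 1 : ℕ),
      partialCoeffSum_eq_sub_one_add h ((d : ℤ) - k), coeffZ_natCast, hmirror,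
      show ((k + 1 : ℕ) : ℤ) - 1 = k by omega, show (d : ℤ) - k - 1 = d - (k + 1 : ℕ) by omega]
    ring

variable {s ℓ r : ℕ}

theorem exists_geomPoly_mul_eq (hpq : IsSymmDecomp d h p q) (hs : h.natDegree ≤ s)
    (hsd : s ≤ d) (hℓs : ℓ + s = d + 1) (hr : ℓ ≤ r) :
    ∃ w : ℝ[X], geomPoly r * h = p + X ^ ℓ * w ∧ ∀ i : ℕ,
      w.coeff i = h.eval 1 - partialCoeffSum h ((s : ℤ) - 1 - i)
        - partialCoeffSum h ((ℓ : ℤ) + i - r) := by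
  have hcoeff (k : ℕ) : (geomPoly r * h - p).coeff k =
      h.eval 1 - partialCoeffSum h ((d : ℤ) - k) - partialCoeffSum h ((k : ℤ) - r) := by
    rw [coeff_sub, coeff_geomPoly_mul, hpq.coeff_eq (by omega)]
    ring
  obtain ⟨w, hw⟩ : X ^ ℓ ∣ geomPoly r * h - p := X_pow_dvd_iff.2 fun k hk => by
    rw [hcoeff, partialCoeffSum_of_natDegree_le h (by omega), partialCoeffSum_of_neg h (by omega)]
    ring
  refine ⟨w, by rw [← hw]; ring, fun i => ?_⟩
  rw [← coeff_X_pow_mul w ℓ i, ← hw, hcoeff, show (d : ℤ) - (i + ℓ : ℕ) = s - 1 - i by omega,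
    show ((i + ℓ : ℕ) : ℤ) - r = ℓ + i - r by omega]

end IsSymmDecomp

theorem isPalindromic_of_coeff_eq {h w : ℝ[X]} {s ℓ r : ℕ} (hs : h.natDegree ≤ s) (hr : ℓ ≤ r)
    (hw : ∀ i : ℕ, w.coeff i = h.eval 1 - partialCoeffSum h ((s : ℤ) - 1 - i)
      - partialCoeffSum h ((ℓ : ℤ) + i - r)) :
    IsPalindromic (r + s - ℓ - 1) w := by
  refine ⟨natDegree_le_iff_coeff_eq_zero.2 fun i hi => ?_, fun i hi => ?_⟩
  · rw [hw, partialCoeffSum_of_neg h (by omega), partialCoeffSum_of_natDegree_le h (by omega)]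
    ring
  · by_cases hrs : r + s ≤ ℓ
    · obtain rfl : i = 0 := by omega
      rw [show r + s - ℓ - 1 - 0 = 0 by omega]
    · rw [hw, hw, show (s : ℤ) - 1 - ((r + s - ℓ - 1 - i : ℕ) : ℤ) = ℓ + i - r by omega,
        show (ℓ : ℤ) + ((r + s - ℓ - 1 - i : ℕ) : ℤ) - r = s - 1 - i by omega]
      ring

theorem statement2_general (d s ℓ : ℕ) (h : ℝ[X]) (hdeg : h.natDegree = s)
    (hsd : s ≤ d) (p q : ℝ[X]) (hpq : IsSymmDecomp d h p q)
    (hℓ : ℓ = d + 1 - s) (r : ℕ) (hr : ℓ ≤ r) :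
    (∃! vw : ℝ[X] × ℝ[X],
      vw.1.natDegree ≤ d ∧ (∀ i ≤ d, vw.1.coeff i = vw.1.coeff (d - i)) ∧
      vw.2.natDegree ≤ r + s - ℓ - 1 ∧
      (∀ i ≤ r + s - ℓ - 1, vw.2.coeff i = vw.2.coeff (r + s - ℓ - 1 - i)) ∧
      geomPoly r * h = vw.1 + X ^ ℓ * vw.2) ∧
    (∀ v w : ℝ[X],
      (v.natDegree ≤ d ∧ (∀ i ≤ d, v.coeff i = v.coeff (d - i)) ∧
       w.natDegree ≤ r + s - ℓ - 1 ∧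
       (∀ i ≤ r + s - ℓ - 1, w.coeff i = w.coeff (r + s - ℓ - 1 - i)) ∧
       geomPoly r * h = v + X ^ ℓ * w) →
      (∀ i ≤ d, v.coeff i =
          ∑ j ∈ Finset.range (i + 1), h.coeff j
            - ∑ j ∈ Finset.range i, coeffZ h ((d : ℤ) - j)) ∧
      (∀ i ≤ r + s - ℓ - 1, w.coeff i =
          -(∑ j ∈ Finset.range (i + 1), coeffZ h ((ℓ : ℤ) + j - r))
            + ∑ j ∈ Finset.range (i + 1), coeffZ h ((s : ℤ) - j)) ∧
      v = p) := by
  have hℓs : ℓ + s = d + 1 := by omega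
  obtain ⟨w₀, hgeom, hw₀⟩ := hpq.exists_geomPoly_mul_eq hdeg.le hsd hℓs hr
  have hp : IsPalindromic d p := ⟨hpq.2.1, hpq.2.2.1⟩
  have hw₀pal : IsPalindromic (r + s - ℓ - 1) w₀ := isPalindromic_of_coeff_eq hdeg.le hr hw₀
  have huniq (v w : ℝ[X]) (hv : IsPalindromic d v) (hw : IsPalindromic (r + s - ℓ - 1) w)
      (hvw : geomPoly r * h = v + X ^ ℓ * w) : v = p ∧ w = w₀ :=
    hv.eq_of_add_X_pow_mul_eq hp hw hw₀pal (by omega) (by omega) (hvw.symm.trans hgeom)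
  refine ⟨⟨(p, w₀), ⟨hp.1, hp.2, hw₀pal.1, hw₀pal.2, hgeom⟩, ?_⟩, ?_⟩
  · rintro ⟨v, w⟩ ⟨hv₁, hv₂, hw₁, hw₂, hvw⟩
    obtain ⟨rfl, rfl⟩ := huniq v w ⟨hv₁, hv₂⟩ ⟨hw₁, hw₂⟩ hvw
    rfl
  rintro v w ⟨hv₁, hv₂, hw₁, hw₂, hvw⟩
  obtain ⟨rfl, rfl⟩ := huniq v w ⟨hv₁, hv₂⟩ ⟨hw₁, hw₂⟩ hvw
  have htotal (k : ℤ) (hk : (s : ℤ) ≤ k) : partialCoeffSum h k = h.eval 1 :=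
    partialCoeffSum_of_natDegree_le h (by omega)
  refine ⟨fun i hi => ?_, fun i hi => ?_, rfl⟩
  · rw [hpq.coeff_eq (by omega), ← partialCoeffSum_natCast, sum_range_coeffZ_sub,
      htotal d (by omega)]
    ring
  · simp_rw [hw₀, add_sub_right_comm (ℓ : ℤ), sum_range_coeffZ_add, sum_range_coeffZ_sub,
      partialCoeffSum_of_neg h (show (ℓ : ℤ) - r - 1 < 0 by omega), htotal s le_rfl]
    push_cast
    ring_nf

/-- (Proposition `decomp2`.) For `h` of degree `s ≤ d` with symmetric
decomposition `(p, q)`, `ℓ = d+1-s` and `r ≥ ℓ`, there are unique symmetric polynomials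
`v_r` (w.r.t. `d`) and `w_r` (w.r.t. `r+s-ℓ-1`) with
`(1+t+⋯+t^{r-1})·h = v_r + t^ℓ·w_r`; moreover their coefficients are given by the stated
formulas and `v_r = p`. -/
theorem statement2 (d s ℓ : ℕ) (h : ℝ[X]) (hne : h ≠ 0) (hdeg : h.natDegree = s)
    (hsd : s ≤ d) (p q : ℝ[X]) (hpq : IsSymmDecomp d h p q)
    (hℓ : ℓ = d + 1 - s) (r : ℕ) (hr : ℓ ≤ r) :
    (∃! vw : ℝ[X] × ℝ[X],
      vw.1.natDegree ≤ d ∧ (∀ i ≤ d, vw.1.coeff i = vw.1.coeff (d - i)) ∧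
      vw.2.natDegree ≤ r + s - ℓ - 1 ∧
      (∀ i ≤ r + s - ℓ - 1, vw.2.coeff i = vw.2.coeff (r + s - ℓ - 1 - i)) ∧
      geomPoly r * h = vw.1 + X ^ ℓ * vw.2) ∧
    (∀ v w : ℝ[X],
      (v.natDegree ≤ d ∧ (∀ i ≤ d, v.coeff i = v.coeff (d - i)) ∧
       w.natDegree ≤ r + s - ℓ - 1 ∧
       (∀ i ≤ r + s - ℓ - 1, w.coeff i = w.coeff (r + s - ℓ - 1 - i)) ∧
       geomPoly r * h = v + X ^ ℓ * w) →
      (∀ i ≤ d, v.coeff i =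
          ∑ j ∈ Finset.range (i + 1), h.coeff j
            - ∑ j ∈ Finset.range i, coeffZ h ((d : ℤ) - j)) ∧
      (∀ i ≤ r + s - ℓ - 1, w.coeff i =
          -(∑ j ∈ Finset.range (i + 1), coeffZ h ((ℓ : ℤ) + j - r))
            + ∑ j ∈ Finset.range (i + 1), coeffZ h ((s : ℤ) - j)) ∧
      v = p) :=
  statement2_general d s ℓ h hdeg hsd p q hpq hℓ r hr
end

section
/- Let h(t) be a real polynomial of degree s ≤ d with h(0) > 0, let r be an integer with 1 ≤ r ≤ d - s, and let (p̃, q̃) be the symmetric decomposition of U_r^{d+1}h(t) with respect to d. Then the coefficient of t^{d-1} in q̃ equals -h(0) < 0; in particular, q̃ has a negative coefficient. -/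
open Polynomial

/-! The coefficient of `t^d` in `U_r^{d+1} h` vanishes, because `h·(1+⋯+t^{r-1})^{d+1}` has
degree at most `s + (d+1)(r-1) < rd`, while its constant coefficient is `h(0)`. Comparing the
coefficients of `t^0` and `t^d` in `p̃ + t·q̃`, the symmetry `p̃_d = p̃_0` leaves
`q̃_{d-1} = 0 - h(0)`. -/

lemma sect_coeff {r : ℕ} (hr : 0 < r) (i : ℕ) (f : ℝ[X]) (k : ℕ) :
    (sect r i f).coeff k = f.coeff (r * k + i) := by
  simp only [sect, finsetSum_coeff, coeff_C_mul, coeff_X_pow, mul_ite, mul_one, mul_zero,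
    Finset.sum_ite_eq, Finset.mem_range]
  split_ifs with hk
  · rfl
  · exact (coeff_eq_zero_of_natDegree_lt (by nlinarith)).symm

lemma geomPoly_coeff_zero {r : ℕ} (hr : 0 < r) : (geomPoly r).coeff 0 = 1 := by
  simp [geomPoly, coeff_X_pow, hr]

lemma natDegree_geomPoly_le (r : ℕ) : (geomPoly r).natDegree ≤ r - 1 :=
  natDegree_sum_le_of_forall_le _ _ fun j hj => by
    rw [natDegree_X_pow]
    exact Nat.le_sub_one_of_lt (Finset.mem_range.mp hj)

lemma Uop_coeff_zero {r : ℕ} (hr : 0 < r) (D : ℕ) (h : ℝ[X]) :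
    (Uop r D h).coeff 0 = h.coeff 0 := by
  rw [Uop, sect_coeff hr, mul_zero, mul_coeff_zero, coeff_zero_eq_eval_zero (_ ^ D), eval_pow,
    ← coeff_zero_eq_eval_zero, geomPoly_coeff_zero hr, one_pow, mul_one]

lemma Uop_coeff_eq_zero_of_lt {r : ℕ} (hr : 0 < r) (D : ℕ) {h : ℝ[X]} {k : ℕ}
    (hk : h.natDegree + D * (r - 1) < r * k) : (Uop r D h).coeff k = 0 := by
  rw [Uop, sect_coeff hr, add_zero]
  refine coeff_eq_zero_of_natDegree_lt (lt_of_le_of_lt ?_ hk)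
  calc (h * geomPoly r ^ D).natDegree ≤ h.natDegree + D * (geomPoly r).natDegree :=
        natDegree_mul_le.trans (Nat.add_le_add_left natDegree_pow_le _)
    _ ≤ h.natDegree + D * (r - 1) := by gcongr; exact natDegree_geomPoly_le r

lemma IsSymmDecomp.coeff_pred {d : ℕ} {f p q : ℝ[X]} (hpq : IsSymmDecomp d f p q)
    (hd : 0 < d) : q.coeff (d - 1) = f.coeff d - f.coeff 0 := by
  obtain ⟨rfl, -, hp, -, -⟩ := hpq
  obtain ⟨e, rfl⟩ : ∃ e, d = e + 1 := ⟨d - 1, by omega⟩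
  have hp0 := hp 0 (Nat.zero_le _)
  simp only [Nat.sub_zero] at hp0
  simp [coeff_X_mul, hp0]

theorem statement14_general (d s : ℕ) (h : ℝ[X]) (hdeg : h.natDegree = s)
    (h0 : 0 < h.coeff 0) (r : ℕ) (hr1 : 1 ≤ r) (hr2 : r ≤ d - s)
    (pt qt : ℝ[X]) (hpq : IsSymmDecomp d (Uop r (d + 1) h) pt qt) :
    qt.coeff (d - 1) = -h.coeff 0 ∧ ∃ i, qt.coeff i < 0 := by
  have hdeg_lt : h.natDegree + (d + 1) * (r - 1) < r * d := by
    obtain ⟨r', rfl⟩ : ∃ r', r = r' + 1 := ⟨r - 1, by omega⟩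
    rw [hdeg, Nat.add_sub_cancel]
    nlinarith [Nat.lt_sub_iff_add_lt.mp (show r' < d - s by omega)]
  have key : qt.coeff (d - 1) = -h.coeff 0 := by
    rw [hpq.coeff_pred (by omega), Uop_coeff_eq_zero_of_lt hr1 _ hdeg_lt, Uop_coeff_zero hr1,
      zero_sub]
  exact ⟨key, d - 1, by rw [key]; linarith⟩

/-- (Optimality of the bound in Corollary `nonnegativity`(ii).) If `h` has
degree `s ≤ d` with `h(0) > 0` and `1 ≤ r ≤ d - s`, then in the symmetric decomposition
`(p̃, q̃)` of `U_r^{d+1} h` the coefficient of `t^{d-1}` in `q̃` equals `-h(0) < 0`; in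
particular `q̃` has a negative coefficient. -/
theorem statement14 (d s : ℕ) (h : ℝ[X]) (hdeg : h.natDegree = s) (hsd : s ≤ d)
    (h0 : 0 < h.coeff 0) (r : ℕ) (hr1 : 1 ≤ r) (hr2 : r ≤ d - s)
    (pt qt : ℝ[X]) (hpq : IsSymmDecomp d (Uop r (d + 1) h) pt qt) :
    qt.coeff (d - 1) = -h.coeff 0 ∧ ∃ i, qt.coeff i < 0 :=
  statement14_general d s h hdeg h0 r hr1 hr2 pt qt hpq
end
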